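/- There exists a 2-iterated pushdown automaton with input alphabet {r, s, b, w} that accepts a word u if and only if u = r · s^k · φ(σ^k(W)) · s^k for some integer k ≥ 1; these are exactly the contour words of the truncated white sectors of the pentagrid and of the heptagrid (root read as r, the nodes of the leftmost and rightmost branches below the root read as s, and the bottom level read as the level word of the Fibonacci tree). -/

import Mathlib

/-- Operations on a 2-level iterated pushdown store. -/
inductive Op (Γ : Type*) where
  | pop1 : Op Γ
  | pop2 : Op Γ
  | push1 : List Γ → Op Γ
  | push2 : List Γ → Op Γ

/-- A 2-level pushdown store: a finite list of entries `(A, s)` with `A` a letter of `Γ`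
and `s ∈ Γ*` the inner store of the entry. -/
abbrev Store (Γ : Type*) := List (Γ × List Γ)

/-- The top symbols of a 2-level store: the letter of the top entry followed by the first
letter of its inner store when that inner store is nonempty; an element of `Γ ∪ Γ²`. -/
def topsym {Γ : Type*} : Store Γ → List Γ
  | [] => []
  | (A, s) :: _ => A :: s.take 1

/-- Apply an operation to a 2-level store (a partial operation):
`pop1` removes the top entry; `pop2` removes the first letter of the inner store of the
top entry (when nonempty); `push1 w` replaces the top entry `(A, s)` by the entries
`(w_1, s), …, (w_m, s)`; `push2 u` replaces the top entry `(A, s)` by `(A, u ++ s)`. -/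
def applyOp {Γ : Type*} : Op Γ → Store Γ → Option (Store Γ)
  | .pop1, _ :: rest => some rest
  | .pop2, (A, _ :: s) :: rest => some ((A, s) :: rest)
  | .push1 w, (_, s) :: rest => some (w.map (fun x => (x, s)) ++ rest)
  | .push2 u, (A, s) :: rest => some ((A, u ++ s) :: rest)
  | _, _ => none

/-- A 2-iterated pushdown automaton with state set `Q`, input alphabet `In` and store
alphabet `Γ`: an initial state `q0`, an initial store symbol `Z`, and a transition table
`δ` assigning to each triple `(q, a, t)` — with `a ∈ In ∪ {ε}` and `t ∈ Γ ∪ Γ²` — a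
finite set (list) of instructions `(q', op)`. -/
structure IPDA2 (Q In Γ : Type*) where
  q0 : Q
  Z : Γ
  δ : Q → Option In → List Γ → List (Q × Op Γ)

/-- A configuration: current state, remaining input word, current 2-level store. -/
abbrev Config (Q In Γ : Type*) := Q × List In × Store Γ

/-- One computation step: an instruction from `δ(q, a, topsym ω)` may be applied, where
`a = ε` (no input consumed) or `a` is the first letter of the remaining input (which is
then consumed); the state changes to `q'` and the operation is applied to the store. -/
inductive IPDA2.Step {Q In Γ : Type*} (M : IPDA2 Q In Γ) :
    Config Q In Γ → Config Q In Γ → Prop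
  | eps {q q' : Q} {w : List In} {ω ω' : Store Γ} {op : Op Γ} :
      (q', op) ∈ M.δ q none (topsym ω) → applyOp op ω = some ω' →
      M.Step (q, w, ω) (q', w, ω')
  | read {q q' : Q} {a : In} {w : List In} {ω ω' : Store Γ} {op : Op Γ} :
      (q', op) ∈ M.δ q (some a) (topsym ω) → applyOp op ω = some ω' →
      M.Step (q, a :: w, ω) (q', w, ω')

/-- A finite sequence of computation steps. -/
def IPDA2.Steps {Q In Γ : Type*} (M : IPDA2 Q In Γ) :
    Config Q In Γ → Config Q In Γ → Prop :=
  Relation.ReflTransGen M.Step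

/-- Acceptance: some finite sequence of steps leads from the initial configuration
`(q0, w, [(Z, ε)])` to a configuration with empty remaining input and empty store. -/
def IPDA2.Accepts {Q In Γ : Type*} (M : IPDA2 Q In Γ) (w : List In) : Prop :=
  ∃ q : Q, M.Steps (M.q0, w, [(M.Z, [])]) (q, [], [])

/-- The two-letter alphabet `{B, W}` of node labels. -/
inductive BW where
  | B : BW
  | W : BW
  deriving DecidableEq

/-- The substitution `σ` determined by `σ(B) = BW` and `σ(W) = BWW`, on letters. -/
def sigmaLetter : BW → List BW
  | .B => [.B, .W]
  | .W => [.B, .W, .W]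

/-- The substitution `σ` extended to words (monoid morphism of words). -/
def sigmaWord (w : List BW) : List BW := w.flatMap sigmaLetter

/-- The two-letter input alphabet `{b, w}`. -/
inductive bw where
  | b : bw
  | w : bw
  deriving DecidableEq

/-- The letter renaming `φ : B ↦ b, W ↦ w`. -/
def phi : BW → bw
  | .B => .b
  | .W => .w

/-- The four-letter input alphabet `{r, s, b, w}`. -/
inductive rsbw where
  | r : rsbw
  | s : rsbw
  | b : rsbw
  | w : rsbw
  deriving DecidableEq

/-- The letter renaming `φ : B ↦ b, W ↦ w` into the alphabet `{r, s, b, w}`. -/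
def phi' : BW → rsbw
  | .B => .b
  | .W => .w

/-!
The store alphabet has a bottom symbol, a counter symbol `level` and a symbol `node X` for each
letter `X`. After reading `r`, each `s` pushes a `level` onto the inner store of the bottom entry,
which thus records `k`. The automaton then pushes `node W` carrying a copy of that inner store.
An entry `(node X, level^j)` stands for the word `σ^j(X)`: for `j > 0` the automaton pops one
`level` and replaces the entry by one entry per letter of `σ(X)`, each inheriting the copy
`level^(j-1)` of the inner store; for `j = 0` it reads `φ(X)`. When only the bottom entry is left
it reads one `s` per `level` and empties the store.

Completeness composes these runs. Soundness follows from an invariant of all configurations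
reachable on input `u`, which pins down the consumed prefix of `u` in each state.
-/

theorem IPDA2.step_iff {Q In Γ : Type*} (M : IPDA2 Q In Γ) {q q' : Q} {w w' : List In}
    {ω ω' : Store Γ} :
    M.Step (q, w, ω) (q', w', ω') ↔
      ∃ a : Option In, ∃ op : Op Γ, (q', op) ∈ M.δ q a (topsym ω) ∧
        applyOp op ω = some ω' ∧ w = a.toList ++ w' := by
  constructor
  · rintro (⟨hmem, happ⟩ | ⟨hmem, happ⟩)
    exacts [⟨none, _, hmem, happ, rfl⟩, ⟨some _, _, hmem, happ, rfl⟩]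
  · rintro ⟨_ | a, op, hmem, happ, rfl⟩
    exacts [.eps hmem happ, .read hmem happ]

lemma sigmaWord_append (x y : List BW) : sigmaWord (x ++ y) = sigmaWord x ++ sigmaWord y :=
  List.flatMap_append

lemma sigmaWord_iterate_append (n : ℕ) (x y : List BW) :
    sigmaWord^[n] (x ++ y) = sigmaWord^[n] x ++ sigmaWord^[n] y := by
  induction n generalizing x y with
  | zero => rfl
  | succ n ih => simp only [Function.iterate_succ_apply, sigmaWord_append, ih]

lemma sigmaWord_iterate_nil (n : ℕ) : sigmaWord^[n] [] = [] :=
  Function.iterate_fixed rfl n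

lemma sigmaWord_iterate_cons (n : ℕ) (X : BW) (xs : List BW) :
    sigmaWord^[n] (X :: xs) = sigmaWord^[n] [X] ++ sigmaWord^[n] xs :=
  sigmaWord_iterate_append n [X] xs

lemma sigmaWord_iterate_eq_flatMap (n : ℕ) (xs : List BW) :
    sigmaWord^[n] xs = xs.flatMap fun X => sigmaWord^[n] [X] := by
  induction xs with
  | nil => exact sigmaWord_iterate_nil n
  | cons X xs ih => rw [List.flatMap_cons, ← ih, sigmaWord_iterate_cons]

lemma sigmaWord_iterate_succ_singleton (n : ℕ) (X : BW) :
    sigmaWord^[n + 1] [X] = sigmaWord^[n] (sigmaLetter X) := by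
  rw [Function.iterate_succ_apply, sigmaWord, List.flatMap_singleton]

namespace WhiteSector

inductive State | init | count | run | expand | drain | done
  deriving DecidableEq

inductive StackSym | bottom | level | node (X : BW)
  deriving DecidableEq

open State StackSym

instance : Fintype State :=
  ⟨{init, count, run, expand, drain, done}, by rintro (_ | _ | _ | _ | _ | _) <;> simp⟩

instance : Fintype StackSym :=
  ⟨{bottom, level, node .B, node .W}, by rintro (_ | _ | _ | _) <;> simp⟩

def δ : State → Option rsbw → List StackSym → List (State × Op StackSym)
  | init, some .r, [bottom] => [(count, .push2 [])]
  | count, some .s, bottom :: _ => [(count, .push2 [level])]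
  | count, none, [bottom, level] => [(run, .push1 [node .W, bottom])]
  | run, none, [node _, level] => [(expand, .pop2)]
  | expand, none, node X :: _ => [(run, .push1 ((sigmaLetter X).map node))]
  | run, some .b, [node .B] => [(run, .pop1)]
  | run, some .w, [node .W] => [(run, .pop1)]
  | run, some .s, [bottom, level] => [(drain, .pop2)]
  | drain, some .s, [bottom, level] => [(drain, .pop2)]
  | drain, none, [bottom] => [(done, .pop1)]
  | _, _, _ => []

def M : IPDA2 State rsbw StackSym := ⟨init, bottom, δ⟩

def encode (es : List (BW × ℕ)) : Store StackSym :=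
  es.map fun e => (node e.1, List.replicate e.2 level)

def pending (es : List (BW × ℕ)) : List BW :=
  es.flatMap fun e => sigmaWord^[e.2] [e.1]

lemma pending_append (es es' : List (BW × ℕ)) :
    pending (es ++ es') = pending es ++ pending es' :=
  List.flatMap_append

lemma pending_map_pair (j : ℕ) (xs : List BW) :
    pending (xs.map (·, j)) = sigmaWord^[j] xs := by
  rw [pending, List.flatMap_map, sigmaWord_iterate_eq_flatMap]

def contour (k : ℕ) : List rsbw :=
  rsbw.r :: (List.replicate k rsbw.s ++ (sigmaWord^[k] [BW.W]).map phi' ++ List.replicate k rsbw.s)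

/-- In state `run`, `v` is the part of `σ^k(W)` read so far and `pending es` the part still
encoded in the store. -/
def Invariant (u : List rsbw) : Config State rsbw StackSym → Prop
  | (init, w, ω) => ω = [(bottom, [])] ∧ w = u
  | (count, w, ω) => ∃ j, ω = [(bottom, List.replicate j level)] ∧
      u = rsbw.r :: (List.replicate j rsbw.s ++ w)
  | (run, w, ω) => ∃ k es v, 1 ≤ k ∧ ω = encode es ++ [(bottom, List.replicate k level)] ∧
      v ++ pending es = sigmaWord^[k] [BW.W] ∧
      u = rsbw.r :: (List.replicate k rsbw.s ++ v.map phi' ++ w)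
  | (expand, w, ω) => ∃ k X j es v, 1 ≤ k ∧
      ω = (node X, List.replicate j level) :: (encode es ++ [(bottom, List.replicate k level)]) ∧
      v ++ sigmaWord^[j] (sigmaLetter X) ++ pending es = sigmaWord^[k] [BW.W] ∧
      u = rsbw.r :: (List.replicate k rsbw.s ++ v.map phi' ++ w)
  | (drain, w, ω) => ∃ j m, 1 ≤ j + m ∧ ω = [(bottom, List.replicate m level)] ∧
      u = rsbw.r :: (List.replicate (j + m) rsbw.s ++ (sigmaWord^[j + m] [BW.W]).map phi' ++
        List.replicate j rsbw.s ++ w)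
  | (done, w, ω) => ∃ k, 1 ≤ k ∧ ω = [] ∧ u = contour k ++ w

def Preserves (q : State) : Prop :=
  ∀ u a op q' w' ω ω', Invariant u (q, Option.toList a ++ w', ω) → (q', op) ∈ δ q a (topsym ω) →
    applyOp op ω = some ω' → Invariant u (q', w', ω')

lemma preserves_init : Preserves init := by
  rintro u a op q' w' ω ω' ⟨rfl, rfl⟩ hmem happ
  -- Every entry of `δ` holds at most one instruction, so `rcases hmem` either refutes the step
  -- or determines `q'` and `op`; `cases happ` then computes the new store.
  rcases a with _ | _ | _ | _ | _ <;> rcases hmem with _ | ⟨_, ⟨⟩⟩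
  cases happ
  exact ⟨0, rfl, rfl⟩

lemma preserves_count : Preserves count := by
  rintro u a op q' w' ω ω' ⟨j, rfl, rfl⟩ hmem happ
  rcases j with _ | j <;> rcases a with _ | _ | _ | _ | _ <;>
    rcases hmem with _ | ⟨_, ⟨⟩⟩ <;> cases happ
  · exact ⟨1, rfl, rfl⟩
  · exact ⟨j + 1, [(.W, j + 1)], [], by omega, rfl, by simp [pending], by simp⟩
  · exact ⟨j + 2, rfl, by simp [List.replicate_succ']⟩

lemma preserves_run : Preserves run := by
  rintro u a op q' w' ω ω' ⟨k, es, v, hk, rfl, hv, rfl⟩ hmem happ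
  obtain ⟨k, rfl⟩ := Nat.exists_eq_add_of_le' hk
  rcases es with _ | ⟨⟨X, _ | j⟩, es⟩ <;> rcases a with _ | _ | _ | _ | _ <;>
    try cases X
  all_goals rcases hmem with _ | ⟨_, ⟨⟩⟩
  all_goals cases happ
  · obtain rfl : v = sigmaWord^[k + 1] [.W] := by simpa [pending] using hv
    refine ⟨1, k, by omega, rfl, ?_⟩
    simp [Nat.add_comm 1 k]
  · exact ⟨k + 1, es, v ++ [.B], hk, rfl, by simpa [pending] using hv, by simp [phi']⟩
  · exact ⟨k + 1, es, v ++ [.W], hk, rfl, by simpa [pending] using hv, by simp [phi']⟩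
  all_goals
    refine ⟨k + 1, _, j, es, v, hk, rfl, ?_, by simp⟩
    simpa [pending, sigmaWord_iterate_succ_singleton] using hv

lemma preserves_expand : Preserves expand := by
  rintro u a op q' w' ω ω' ⟨k, X, j, es, v, hk, rfl, hv, rfl⟩ hmem happ
  rcases a with _ | _ | _ | _ | _ <;> rcases hmem with _ | ⟨_, ⟨⟩⟩
  cases happ
  refine ⟨k, (sigmaLetter X).map (·, j) ++ es, v, hk, by simp [encode], ?_, by simp⟩
  rwa [pending_append, pending_map_pair, ← List.append_assoc]

lemma preserves_drain : Preserves drain := by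
  rintro u a op q' w' ω ω' ⟨j, m, hjm, rfl, rfl⟩ hmem happ
  rcases m with _ | m <;> rcases a with _ | _ | _ | _ | _ <;>
    rcases hmem with _ | ⟨_, ⟨⟩⟩ <;> cases happ
  · exact ⟨j, hjm, rfl, by simp [contour]⟩
  · refine ⟨j + 1, m, by omega, rfl, ?_⟩
    simp [List.replicate_succ', show j + 1 + m = j + (m + 1) by omega]

lemma preserves_done : Preserves done := by
  rintro u a op q' w' ω ω' ⟨k, hk, rfl, rfl⟩ hmem
  rcases a with _ | _ | _ | _ | _ <;> cases hmem

lemma Invariant.step {u : List rsbw} {c c' : Config State rsbw StackSym}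
    (h : Invariant u c) (hstep : M.Step c c') : Invariant u c' := by
  obtain ⟨q, w, ω⟩ := c
  obtain ⟨q', w', ω'⟩ := c'
  obtain ⟨a, op, hmem, happ, rfl⟩ := (IPDA2.step_iff M).1 hstep
  have hq : Preserves q := by
    cases q
    exacts [preserves_init, preserves_count, preserves_run, preserves_expand, preserves_drain,
      preserves_done]
  exact hq u a op q' w' ω ω' h hmem happ

lemma Invariant.steps {u : List rsbw} {c c' : Config State rsbw StackSym}
    (h : Invariant u c) (hs : M.Steps c c') : Invariant u c' := by
  induction hs with
  | refl => exact h
  | tail _ hstep ih => exact ih.step hstep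

lemma exists_eq_contour_of_accepts {u : List rsbw} (h : M.Accepts u) :
    ∃ k, 1 ≤ k ∧ u = contour k := by
  obtain ⟨q, hs⟩ := h
  have hinv := (show Invariant u (M.q0, u, [(M.Z, [])]) from ⟨rfl, rfl⟩).steps hs
  cases q
  case done => simpa [Invariant] using hinv
  all_goals simp [Invariant, encode] at hinv

lemma steps_count (n j : ℕ) (w : List rsbw) :
    M.Steps (count, List.replicate n rsbw.s ++ w, [(bottom, List.replicate j level)])
      (count, w, [(bottom, List.replicate (n + j) level)]) := by
  induction n generalizing j with
  | zero => rw [Nat.zero_add]; exact .refl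
  | succ n ih =>
    rw [Nat.add_right_comm]
    exact .head (.read (List.mem_singleton.mpr rfl) rfl) (ih (j + 1))

lemma steps_run_sigmaWord_iterate (j : ℕ) (xs : List BW) (es : Store StackSym) (w : List rsbw) :
    M.Steps (run, (sigmaWord^[j] xs).map phi' ++ w, encode (xs.map (·, j)) ++ es)
      (run, w, es) := by
  induction j generalizing xs es w with
  | zero =>
    induction xs generalizing w with
    | nil => exact .refl
    | cons X xs ih =>
      cases X
      all_goals exact .head (.read (List.mem_singleton.mpr rfl) rfl) (ih w)
  | succ j ihj =>
    induction xs generalizing w with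
    | nil => rw [sigmaWord_iterate_nil]; exact .refl
    | cons X xs ih =>
      rw [sigmaWord_iterate_cons, sigmaWord_iterate_succ_singleton, List.map_append,
        List.append_assoc]
      cases X
      all_goals
        refine .head (.eps (List.mem_singleton.mpr rfl) rfl) ?_
        refine .head (.eps (List.mem_singleton.mpr rfl) rfl) ?_
        exact (ihj _ _ _).trans (ih w)

lemma steps_drain (m : ℕ) :
    M.Steps (drain, List.replicate m rsbw.s, [(bottom, List.replicate m level)])
      (done, [], []) := by
  induction m with
  | zero => exact .single (.eps (List.mem_singleton.mpr rfl) rfl)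
  | succ m ih => exact .head (.read (List.mem_singleton.mpr rfl) rfl) ih

lemma accepts_contour {k : ℕ} (hk : 1 ≤ k) : M.Accepts (contour k) := by
  obtain ⟨k, rfl⟩ := Nat.exists_eq_add_of_le' hk
  refine ⟨done, .head (.read (List.mem_singleton.mpr rfl) rfl) ?_⟩
  rw [List.append_assoc]
  refine (steps_count (k + 1) 0 _).trans ?_
  refine .head (.eps (List.mem_singleton.mpr rfl) rfl) ?_
  refine (steps_run_sigmaWord_iterate (k + 1) [.W] _ _).trans ?_
  exact .head (.read (List.mem_singleton.mpr rfl) rfl) (steps_drain k)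

end WhiteSector

/-- There exists a 2-iterated pushdown automaton with input alphabet `{r, s, b, w}` that
accepts a word `u` if and only if `u = r · s^k · φ(σ^k(W)) · s^k` for some integer
`k ≥ 1` — exactly the contour words of the truncated white sectors of the pentagrid and
of the heptagrid (root read as `r`, the nodes of the leftmost and rightmost branches
below the root read as `s`, the bottom level read as the level word of the Fibonacci
tree). -/
theorem exists_ipda2_white_sector_contours :
    ∃ (Q Γ : Type) (_ : Fintype Q) (_ : Fintype Γ) (M : IPDA2 Q rsbw Γ),
      ∀ u : List rsbw,
        M.Accepts u ↔
          ∃ k : ℕ, 1 ≤ k ∧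
            u = rsbw.r :: (List.replicate k rsbw.s ++
                  (sigmaWord^[k] [BW.W]).map phi' ++ List.replicate k rsbw.s) :=
  ⟨WhiteSector.State, WhiteSector.StackSym, inferInstance, inferInstance, WhiteSector.M,
    fun _ => ⟨WhiteSector.exists_eq_contour_of_accepts,
      fun ⟨_, hk, hu⟩ => hu ▸ WhiteSector.accepts_contour hk⟩⟩
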